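/- arXiv:2602.13981 — 2 statements merged into one kernel-verified Lean document; each statement's English description precedes it below -/
import Mathlib

section
/- Let I = (G, 𝐓, W, k) be a Vertex Multicut Compression instance, i.e., G = (V,E) is a finite simple undirected graph, 𝐓 is a finite set of pairs of vertices, W ⊆ V is a vertex multicut of (G,𝐓) with |W| ≤ k+1, and k is a nonnegative integer. If I has a solution, then I has a solution X* that is k-shadow-removable with respect to W. -/
open scoped Classical

variable {V : Type*} [Fintype V] [DecidableEq V]

/-- The graph `G − X`: the graph obtained from `G` by deleting the vertices of `X`
(encoded on the same vertex type: vertices of `X` become isolated). -/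
def removeVerts (G : SimpleGraph V) (X : Set V) : SimpleGraph V where
  Adj u v := G.Adj u v ∧ u ∉ X ∧ v ∉ X
  symm := ⟨by rintro u v ⟨h, hu, hv⟩; exact ⟨h.symm, hv, hu⟩⟩
  loopless := ⟨by rintro v ⟨h, -, -⟩; exact G.ne_of_adj h rfl⟩

/-- The open neighborhood `N(C)` of a vertex set `C`. -/
def nbhd (G : SimpleGraph V) (C : Set V) : Set V :=
  {v | v ∉ C ∧ ∃ u ∈ C, G.Adj u v}

/-- The set of vertices connected to `S` in `G − X`. -/
def reachSet (G : SimpleGraph V) (X S : Set V) : Set V :=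
  {v | ∃ s ∈ S, (removeVerts G X).Reachable s v}

/-- `X` is an `S`–`T` separator: `X ⊆ V ∖ (S ∪ T)` and no path of `G − X` connects `S` to `T`. -/
def IsSeparator (G : SimpleGraph V) (S T X : Set V) : Prop :=
  Disjoint X (S ∪ T) ∧ ∀ s ∈ S, ∀ t ∈ T, ¬ (removeVerts G X).Reachable s t

/-- A minimal `S`–`T` separator. -/
def IsMinimalSep (G : SimpleGraph V) (S T X : Set V) : Prop :=
  IsSeparator G S T X ∧ ∀ X' ⊂ X, ¬ IsSeparator G S T X'

/-- A minimum `S`–`T` separator. -/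
def IsMinimumSep (G : SimpleGraph V) (S T X : Set V) : Prop :=
  IsSeparator G S T X ∧ ∀ X', IsSeparator G S T X' → X.ncard ≤ X'.ncard

/-- A separator `X` is farthest (w.r.t. `S`) if every `S`–`T` separator whose reachable set
strictly contains that of `X` is strictly larger. -/
def IsFarthest (G : SimpleGraph V) (S T X : Set V) : Prop :=
  ∀ X', IsSeparator G S T X' → reachSet G X S ⊂ reachSet G X' S → X.ncard < X'.ncard

/-- An important `S`–`T` separator. -/
def IsImportantSep (G : SimpleGraph V) (S T X : Set V) : Prop :=
  IsMinimalSep G S T X ∧ ∀ X', IsMinimalSep G S T X' →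
    reachSet G X S ⊂ reachSet G X' S → X.ncard < X'.ncard

/-- The shadow `R_{G,W}(Y)`: the vertices of `G − Y` outside `W` that are not connected
to `W` in `G − Y`. -/
def shadow (G : SimpleGraph V) (W Y : Set V) : Set V :=
  {v | v ∉ W ∧ v ∉ Y ∧ ∀ w ∈ W, ¬ (removeVerts G Y).Reachable v w}

/-- `Y` is `k`-shadow-removable with respect to `W`. -/
def KShadowRemovable (G : SimpleGraph V) (W : Set V) (k : ℕ) (Y : Set V) : Prop :=
  Y.ncard ≤ k ∧
  (∀ v ∈ shadow G W Y, ∃ X, IsImportantSep G {v} W X ∧ X.ncard ≤ k ∧ X ⊆ Y) ∧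
  (∀ v ∈ Y, ∀ X, IsImportantSep G {v} W X → X.ncard ≤ k → ¬ X ⊆ Y)

/-- `X` is a vertex multicut of `(G, Pairs)`. -/
def IsMulticut (G : SimpleGraph V) (Pairs : Set (V × V)) (X : Set V) : Prop :=
  ∀ p ∈ Pairs, ¬ (removeVerts G X).Reachable p.1 p.2

/-- A solution of the Vertex Multicut Compression instance `(G, Pairs, W, k)`. -/
def IsSolution (G : SimpleGraph V) (Pairs : Set (V × V)) (W : Set V) (k : ℕ)
    (X : Set V) : Prop :=
  X.ncard ≤ k ∧ IsMulticut G Pairs X ∧ Disjoint X W ∧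
    ∀ w₁ ∈ W, ∀ w₂ ∈ W, w₁ ≠ w₂ → ¬ (removeVerts G X).Reachable w₁ w₂

set_option linter.unusedSectionVars false
set_option linter.unusedVariables false

lemma removeVerts_mono {G : SimpleGraph V} {X X' : Set V} (h : X ⊆ X') :
    removeVerts G X' ≤ removeVerts G X :=
  fun _ _ ⟨ha, hu, hv⟩ => ⟨ha, fun c => hu (h c), fun c => hv (h c)⟩

lemma reachSet_mono {G : SimpleGraph V} {X X' S : Set V} (h : X ⊆ X') :
    reachSet G X' S ⊆ reachSet G X S := by
  rintro v ⟨s, hs, hr⟩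
  exact ⟨s, hs, hr.mono (removeVerts_mono h)⟩

lemma isolated {G : SimpleGraph V} {X : Set V} {a b : V}
    (h : (removeVerts G X).Reachable a b) (ha : a ∈ X) : a = b := by
  obtain ⟨p⟩ := h
  cases p with
  | nil => rfl
  | cons h q => exact absurd ha h.2.1

/-- Key transfer lemma: walks starting in a "closed" set `C` stay in `C`, and transfer to
the graph with `X'` removed provided non-`X` vertices of `C` avoid `X'`. -/
lemma walk_transfer {G : SimpleGraph V} {X X' C : Set V}
    (hC : ∀ a ∈ C, ∀ c, G.Adj a c → a ∉ X → c ∉ X → c ∈ C)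
    (hX' : ∀ a ∈ C, a ∉ X → a ∉ X') :
    ∀ {a b : V}, (removeVerts G X).Walk a b → a ∈ C →
      (removeVerts G X').Reachable a b ∧ b ∈ C := by
  intro a b p
  induction p with
  | nil => exact fun ha => ⟨SimpleGraph.Reachable.refl _, ha⟩
  | @cons u w b h q ih =>
    intro hu
    obtain ⟨hadj, huX, hwX⟩ := h
    have hwC : w ∈ C := hC u hu w hadj huX hwX
    obtain ⟨hr, hb⟩ := ih hwC
    have hadj' : (removeVerts G X').Adj u w := ⟨hadj, hX' u hu huX, hX' w hwC hwX⟩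
    exact ⟨hadj'.reachable.trans hr, hb⟩

lemma reach_transfer {G : SimpleGraph V} {X X' C : Set V}
    (hC : ∀ a ∈ C, ∀ c, G.Adj a c → a ∉ X → c ∉ X → c ∈ C)
    (hX' : ∀ a ∈ C, a ∉ X → a ∉ X') {a b : V}
    (h : (removeVerts G X).Reachable a b) (ha : a ∈ C) :
    (removeVerts G X').Reachable a b ∧ b ∈ C := by
  obtain ⟨p⟩ := h
  exact walk_transfer hC hX' p ha

lemma reachSet_closed {G : SimpleGraph V} {X S : Set V} :
    ∀ a ∈ reachSet G X S, ∀ c, G.Adj a c → a ∉ X → c ∉ X → c ∈ reachSet G X S := by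
  rintro a ⟨s, hs, hr⟩ c hadj haX hcX
  have hadj' : (removeVerts G X).Adj a c := ⟨hadj, haX, hcX⟩
  exact ⟨s, hs, hr.trans hadj'.reachable⟩

lemma self_mem_reachSet {G : SimpleGraph V} {X S : Set V} {s : V} (hs : s ∈ S) :
    s ∈ reachSet G X S :=
  ⟨s, hs, SimpleGraph.Reachable.refl _⟩

lemma exists_minimal_sep {G : SimpleGraph V} {S T X : Set V} (hX : IsSeparator G S T X) :
    ∃ X', X' ⊆ X ∧ IsMinimalSep G S T X' := by
  classical
  set P : Set ℕ := {n | ∃ Z, Z ⊆ X ∧ IsSeparator G S T Z ∧ Z.ncard = n} with hP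
  have hne : P.Nonempty := ⟨X.ncard, X, subset_rfl, hX, rfl⟩
  obtain ⟨Z, hZX, hZsep, hZn⟩ := Nat.sInf_mem hne
  refine ⟨Z, hZX, hZsep, fun X' hss hsep => ?_⟩
  have h1 : sInf P ≤ X'.ncard := Nat.sInf_le ⟨X', hss.subset.trans hZX, hsep, rfl⟩
  have h2 : X'.ncard < Z.ncard := Set.ncard_lt_ncard hss Z.toFinite
  omega




lemma exists_important {G : SimpleGraph V} {v : V} {W S : Set V}
    (hS : IsSeparator G {v} W S) :
    ∃ S', IsImportantSep G {v} W S' ∧ reachSet G S {v} ⊆ reachSet G S' {v} ∧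
      S'.ncard ≤ S.ncard := by
  classical
  set Q : Set V → Prop := fun Z => IsMinimalSep G {v} W Z ∧
    reachSet G S {v} ⊆ reachSet G Z {v} ∧ Z.ncard ≤ S.ncard with hQ
  set P : Set ℕ := {n | ∃ Z, Q Z ∧ (reachSet G Z {v}).ncard = n} with hP
  have hne : P.Nonempty := by
    obtain ⟨Z, hZS, hZmin⟩ := exists_minimal_sep hS
    exact ⟨(reachSet G Z {v}).ncard, Z, ⟨hZmin, reachSet_mono hZS,
      Set.ncard_le_ncard hZS S.toFinite⟩, rfl⟩
  have hbdd : BddAbove P := by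
    refine ⟨Fintype.card V, ?_⟩
    rintro n ⟨Z, _, rfl⟩
    simpa [Set.ncard_univ] using
      Set.ncard_le_ncard (Set.subset_univ (reachSet G Z {v})) Set.finite_univ
  obtain ⟨S', ⟨hS'min, hS'reach, hS'card⟩, hS'n⟩ := Nat.sSup_mem hne hbdd
  refine ⟨S', ⟨hS'min, fun X'' hmin hss => ?_⟩, hS'reach, hS'card⟩
  by_contra hlt
  push_neg at hlt
  have hmem : (reachSet G X'' {v}).ncard ∈ P :=
    ⟨X'', ⟨hmin, hS'reach.trans hss.subset, hlt.trans hS'card⟩, rfl⟩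
  have h1 : (reachSet G X'' {v}).ncard ≤ sSup P := le_csSup hbdd hmem
  have h2 : (reachSet G S' {v}).ncard < (reachSet G X'' {v}).ncard :=
    Set.ncard_lt_ncard hss (reachSet G X'' {v}).toFinite
  omega

lemma reachSet_not_mem {G : SimpleGraph V} {W Z : Set V} (hZW : Disjoint Z W) :
    ∀ a ∈ reachSet G Z W, a ∉ Z := by
  rintro a ⟨w, hw, hr⟩ haZ
  have : a = w := isolated hr.symm haZ
  exact (Set.disjoint_left.mp hZW haZ) (this ▸ hw)

lemma nbhd_reach_subset {G : SimpleGraph V} {Pairs : Set (V × V)} {W Z : Set V} {k : ℕ}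
    (hZ : IsSolution G Pairs W k Z) : nbhd G (reachSet G Z W) ⊆ Z := by
  rintro u ⟨huA, a, haA, hadj⟩
  by_contra huZ
  exact huA (reachSet_closed a haA u hadj (reachSet_not_mem hZ.2.2.1 a haA) huZ)

/-- Master exchange lemma. -/
lemma exchange_sol {G : SimpleGraph V} {Pairs : Set (V × V)} {W Y Y' C : Set V} {k : ℕ}
    (hW : IsMulticut G Pairs W) (hY : IsSolution G Pairs W k Y)
    (h1 : ∀ c ∈ C, ∀ u, G.Adj c u → u ∉ Y' → u ∈ C)
    (h2 : ∀ c ∈ C, c ∉ W)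
    (h3 : ∀ c ∈ C, c ∉ Y')
    (h4 : Y \ C ⊆ Y') :
    IsMulticut G Pairs Y' ∧
    (∀ w₁ ∈ W, ∀ w₂ ∈ W, w₁ ≠ w₂ → ¬ (removeVerts G Y').Reachable w₁ w₂) ∧
    reachSet G Y' W ⊆ reachSet G Y W := by
  -- closure of C in G - Y'
  have hCin : ∀ a ∈ C, ∀ c, G.Adj a c → a ∉ Y' → c ∉ Y' → c ∈ C :=
    fun a ha c hadj _ hc => h1 a ha c hadj hc
  -- closure of the complement of C in G - Y'
  have hCout : ∀ a ∈ {x | x ∉ C}, ∀ c, G.Adj a c → a ∉ Y' → c ∉ Y' → c ∈ {x | x ∉ C} := by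
    intro a ha c hadj haY' _ hc
    exact ha (h1 c hc a hadj.symm haY')
  have hCoutY : ∀ a ∈ {x | x ∉ C}, a ∉ Y' → a ∉ Y := by
    intro a ha haY' haY
    exact haY' (h4 ⟨haY, ha⟩)
  have hCW : ∀ a ∈ C, a ∉ Y' → a ∉ W := fun a ha _ => h2 a ha
  refine ⟨?_, ?_, ?_⟩
  · -- multicut
    rintro p hp hr
    by_cases hs : p.1 ∈ C
    · exact hW p hp (reach_transfer hCin hCW hr hs).1
    · exact hY.2.1 p hp (reach_transfer hCout hCoutY hr hs).1
  · -- W separation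
    intro w₁ hw₁ w₂ hw₂ hne hr
    have hw₁C : w₁ ∉ C := fun h => h2 w₁ h hw₁
    exact hY.2.2.2 w₁ hw₁ w₂ hw₂ hne (reach_transfer hCout hCoutY hr hw₁C).1
  · -- reach set shrinks
    rintro u ⟨w, hw, hr⟩
    have hwC : w ∉ C := fun h => h2 w h hw
    exact ⟨w, hw, (reach_transfer hCout hCoutY hr hwC).1⟩

/-- (Pushing lemma.) If a Vertex Multicut Compression instance has a solution,
then it has a solution that is `k`-shadow-removable with respect to `W`. -/
theorem exists_shadow_removable_solution
    (G : SimpleGraph V) (Pairs : Set (V × V)) (W : Set V) (k : ℕ)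
    (hW : IsMulticut G Pairs W) (hWcard : W.ncard ≤ k + 1)
    (hex : ∃ X, IsSolution G Pairs W k X) :
    ∃ Xstar, IsSolution G Pairs W k Xstar ∧ KShadowRemovable G W k Xstar := by
  classical
  obtain ⟨X0, hX0⟩ := hex
  set N := Fintype.card V with hN
  have hcard : ∀ Z : Set V, Z.ncard ≤ N := fun Z => by
    simpa [Set.ncard_univ] using Set.ncard_le_ncard (Set.subset_univ Z) Set.finite_univ
  set f : Set V → ℕ := fun Z => (N + 1) * (reachSet G Z W).ncard + Z.ncard with hf
  have hne : {n | ∃ Z, IsSolution G Pairs W k Z ∧ f Z = n}.Nonempty := ⟨f X0, X0, hX0, rfl⟩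
  obtain ⟨Y, hYsol, hfY⟩ := Nat.sInf_mem hne
  have hYmin : ∀ Z, IsSolution G Pairs W k Z → f Y ≤ f Z := fun Z hZ =>
    hfY ▸ Nat.sInf_le ⟨Z, hZ, rfl⟩
  have hYk : Y.ncard ≤ k := hYsol.1
  have hYW : Disjoint Y W := hYsol.2.2.1
  -- key comparison lemma
  have hkey : ∀ Z, IsSolution G Pairs W k Z → reachSet G Z W ⊆ reachSet G Y W →
      reachSet G Z W = reachSet G Y W ∧ Y.ncard ≤ Z.ncard := by
    intro Z hZ hsub
    have h1 : (reachSet G Z W).ncard ≤ (reachSet G Y W).ncard :=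
      Set.ncard_le_ncard hsub (Set.toFinite _)
    have h2 : (N + 1) * (reachSet G Y W).ncard + Y.ncard ≤
        (N + 1) * (reachSet G Z W).ncard + Z.ncard := hYmin Z hZ
    have h3 : Z.ncard ≤ N := hcard Z
    have haeq : (reachSet G Z W).ncard = (reachSet G Y W).ncard := by
      by_contra hne'
      have hlt : (reachSet G Z W).ncard + 1 ≤ (reachSet G Y W).ncard := by omega
      have h5 : (N + 1) * ((reachSet G Z W).ncard + 1) ≤ (N + 1) * (reachSet G Y W).ncard :=
        Nat.mul_le_mul_left _ hlt
      have h6 : (N + 1) * ((reachSet G Z W).ncard + 1) =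
          (N + 1) * (reachSet G Z W).ncard + (N + 1) := by ring
      linarith
    have hYZ : Y.ncard ≤ Z.ncard := by
      rw [haeq] at h2; linarith
    exact ⟨Set.eq_of_subset_of_ncard_le hsub haeq.ge (Set.toFinite _), hYZ⟩
  set A := reachSet G Y W with hA
  have hAY : ∀ a ∈ A, a ∉ Y := reachSet_not_mem hYW
  have hWA : W ⊆ A := fun w hw => self_mem_reachSet hw
  set X₀ := nbhd G A with hX₀
  have hX₀Y : X₀ ⊆ Y := nbhd_reach_subset hYsol
  have hX₀A : ∀ x ∈ X₀, x ∉ A := fun x hx => hx.1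
  -- X₀ is a solution with the same reach set, hence X₀ = Y.
  have hYX₀ : X₀ = Y := by
    have e1 : ∀ c ∈ {x | x ∉ A ∧ x ∉ X₀}, ∀ u, G.Adj c u → u ∉ X₀ →
        u ∈ {x | x ∉ A ∧ x ∉ X₀} := by
      intro c hc u hadj hu
      exact ⟨fun huA => hc.2 ⟨hc.1, u, huA, hadj.symm⟩, hu⟩
    have e2 : ∀ c ∈ {x | x ∉ A ∧ x ∉ X₀}, c ∉ W := fun c hc hw => hc.1 (hWA hw)
    have e3 : ∀ c ∈ {x | x ∉ A ∧ x ∉ X₀}, c ∉ X₀ := fun c hc => hc.2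
    have e4 : Y \ {x | x ∉ A ∧ x ∉ X₀} ⊆ X₀ := by
      rintro y ⟨hyY, hyC⟩
      by_contra hyX₀
      exact hyC ⟨fun hyA => hAY y hyA hyY, hyX₀⟩
    obtain ⟨hX₀mc, hX₀sep, hX₀rsub⟩ := exchange_sol hW hYsol e1 e2 e3 e4
    have hX₀W : Disjoint X₀ W :=
      Set.disjoint_left.mpr fun x hx hxW => (hX₀A x hx) (hWA hxW)
    have hX₀sol : IsSolution G Pairs W k X₀ :=
      ⟨(Set.ncard_le_ncard hX₀Y Y.toFinite).trans hYk, hX₀mc, hX₀W, hX₀sep⟩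
    exact Set.eq_of_subset_of_ncard_le hX₀Y (hkey X₀ hX₀sol hX₀rsub).2 Y.toFinite
  refine ⟨Y, hYsol, ?_⟩
  unfold KShadowRemovable shadow
  refine ⟨hYk, ?_, ?_⟩
  · -- condition 2
    rintro v ⟨hvW, hvY, hvsep⟩
    have hvCv : v ∈ reachSet G Y {v} := self_mem_reachSet rfl
    have hCvY : ∀ c ∈ reachSet G Y {v}, c ∉ Y := by
      rintro c ⟨v', hv', hr⟩ hcY
      rw [Set.mem_singleton_iff] at hv'; rw [hv'] at hr
      exact hvY ((isolated hr.symm hcY) ▸ hcY)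
    have hCvW : ∀ c ∈ reachSet G Y {v}, c ∉ W := by
      rintro c ⟨v', hv', hr⟩ hcW
      rw [Set.mem_singleton_iff] at hv'; rw [hv'] at hr
      exact hvsep c hcW hr
    set S := nbhd G (reachSet G Y {v}) with hSdef
    have hSY : S ⊆ Y := by
      rintro u ⟨huCv, c, hcCv, hadj⟩
      by_contra huY
      exact huCv (reachSet_closed c hcCv u hadj (hCvY c hcCv) huY)
    have hSsep : IsSeparator G {v} W S := by
      constructor
      · rw [Set.disjoint_union_right]
        constructor
        · refine Set.disjoint_left.mpr fun x hx hxv => ?_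
          rw [Set.mem_singleton_iff] at hxv; subst hxv
          exact hx.1 hvCv
        · exact Set.disjoint_left.mpr fun x hx hxW =>
            (Set.disjoint_left.mp hYW (hSY hx)) hxW
      · intro s hs w hw hr
        rw [Set.mem_singleton_iff] at hs
        rw [hs] at hr
        have hcl : ∀ a ∈ reachSet G Y {v}, ∀ c, G.Adj a c → a ∉ S → c ∉ S →
            c ∈ reachSet G Y {v} := by
          intro a ha c hadj _ hcS
          by_contra hcCv
          exact hcS ⟨hcCv, a, ha, hadj⟩
        have := (reach_transfer hcl (fun a _ h => h) hr hvCv).2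
        exact hCvW w this hw
    obtain ⟨S', hS'imp, hrinc, hS'card⟩ := exists_important hSsep
    have hS'sep : IsSeparator G {v} W S' := hS'imp.1.1
    have hvS' : v ∉ S' := fun h => Set.disjoint_left.mp hS'sep.1 h (Or.inl rfl)
    have hvC' : v ∈ reachSet G S' {v} := self_mem_reachSet rfl
    have hCvC' : reachSet G Y {v} ⊆ reachSet G S' {v} := (reachSet_mono hSY).trans hrinc
    have hC'S' : ∀ c ∈ reachSet G S' {v}, c ∉ S' := by
      rintro c ⟨v', hv', hr⟩ hcS'
      rw [Set.mem_singleton_iff] at hv'; rw [hv'] at hr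
      exact hvS' ((isolated hr.symm hcS') ▸ hcS')
    have hC'W : ∀ c ∈ reachSet G S' {v}, c ∉ W := by
      rintro c ⟨v', hv', hr⟩ hcW
      rw [Set.mem_singleton_iff] at hv'; rw [hv'] at hr
      exact hS'sep.2 v rfl c hcW hr
    set Y' := (Y \ reachSet G S' {v}) ∪ S' with hY'def
    have hS'Y' : S' ⊆ Y' := Set.subset_union_right
    have e1 : ∀ c ∈ reachSet G S' {v}, ∀ u, G.Adj c u → u ∉ Y' → u ∈ reachSet G S' {v} :=
      fun c hc u hadj hu =>
        reachSet_closed c hc u hadj (hC'S' c hc) fun h => hu (hS'Y' h)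
    have e3 : ∀ c ∈ reachSet G S' {v}, c ∉ Y' := by
      intro c hc hcY'
      rcases hcY' with h | h
      · exact h.2 hc
      · exact hC'S' c hc h
    obtain ⟨hY'mc, hY'sep, hY'rsub⟩ :=
      exchange_sol hW hYsol e1 hC'W e3 Set.subset_union_left
    have hScup : S ⊆ reachSet G S' {v} ∪ S' := by
      rintro s ⟨hsCv, c, hcCv, hadj⟩
      by_cases hsS' : s ∈ S'
      · exact Or.inr hsS'
      · exact Or.inl (reachSet_closed c (hCvC' hcCv) s hadj (hC'S' c (hCvC' hcCv)) hsS')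
    have hcard' : Y'.ncard ≤ Y.ncard := by
      have t1 : Y'.ncard ≤ (Y \ reachSet G S' {v}).ncard +
          (S' \ (Y \ reachSet G S' {v})).ncard := by
        rw [hY'def, ← Set.union_diff_self]; exact Set.ncard_union_le _ _
      have t2 : S' \ (Y \ reachSet G S' {v}) ⊆ S' \ (S ∩ S') := by
        refine Set.diff_subset_diff_right ?_
        rintro x ⟨hxS, hxS'⟩
        exact ⟨hSY hxS, fun hxC' => hC'S' x hxC' hxS'⟩
      have hIS' : S' ∩ (S ∩ S') = S ∩ S' :=
        Set.inter_eq_self_of_subset_right Set.inter_subset_right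
      have t3 := Set.ncard_inter_add_ncard_diff_eq_ncard S' (S ∩ S') S'.toFinite
      rw [hIS'] at t3
      have t4 := Set.ncard_inter_add_ncard_diff_eq_ncard S S' S.toFinite
      have t5 : S \ S' ⊆ Y ∩ reachSet G S' {v} := by
        rintro x ⟨hxS, hxS'⟩
        rcases hScup hxS with h | h
        · exact ⟨hSY hxS, h⟩
        · exact absurd h hxS'
      have t6 : (S \ S').ncard ≤ (Y ∩ reachSet G S' {v}).ncard :=
        Set.ncard_le_ncard t5 (Set.toFinite _)
      have t7 := Set.ncard_inter_add_ncard_diff_eq_ncard Y (reachSet G S' {v}) Y.toFinite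
      have t8 : (S' \ (Y \ reachSet G S' {v})).ncard ≤ (S' \ (S ∩ S')).ncard :=
        Set.ncard_le_ncard t2 (Set.toFinite _)
      have t9 : S'.ncard ≤ S.ncard := hS'card
      omega
    have hY'W : Disjoint Y' W := by
      rw [hY'def, Set.disjoint_union_left]
      exact ⟨Disjoint.mono_left Set.diff_subset hYW,
        Set.disjoint_left.mpr fun x hx hxW =>
          Set.disjoint_left.mp hS'sep.1 hx (Or.inr hxW)⟩
    have hY'sol : IsSolution G Pairs W k Y' := ⟨hcard'.trans hYk, hY'mc, hY'W, hY'sep⟩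
    obtain ⟨hreq, hYle⟩ := hkey Y' hY'sol hY'rsub
    have hYeq : Y'.ncard = Y.ncard := le_antisymm hcard' hYle
    have hnb' : nbhd G (reachSet G Y' W) ⊆ Y' := nbhd_reach_subset hY'sol
    rw [hreq, ← hX₀] at hnb'
    have hYsubY' : Y ⊆ Y' := by rw [← hYX₀]; exact hnb'
    have hYY' : Y = Y' := Set.eq_of_subset_of_ncard_le hYsubY' hYeq.le Y'.toFinite
    refine ⟨S', hS'imp, hS'card.trans ((Set.ncard_le_ncard hSY Y.toFinite).trans hYk), ?_⟩
    rw [hYY']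
    exact hS'Y'
  · -- condition 3
    intro v hvY X hXimp hXk hXY
    have hXsep : IsSeparator G {v} W X := hXimp.1.1
    have hvX : v ∉ X := fun h => Set.disjoint_left.mp hXsep.1 h (Or.inl rfl)
    have hvC : v ∈ reachSet G X {v} := self_mem_reachSet rfl
    have hCX : ∀ c ∈ reachSet G X {v}, c ∉ X := by
      rintro c ⟨v', hv', hr⟩ hcX
      rw [Set.mem_singleton_iff] at hv'; rw [hv'] at hr
      exact hvX ((isolated hr.symm hcX) ▸ hcX)
    have hCW : ∀ c ∈ reachSet G X {v}, c ∉ W := by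
      rintro c ⟨v', hv', hr⟩ hcW
      rw [Set.mem_singleton_iff] at hv'; rw [hv'] at hr
      exact hXsep.2 v rfl c hcW hr
    set Y' := (Y \ reachSet G X {v}) ∪ X with hY'def
    have e1 : ∀ c ∈ reachSet G X {v}, ∀ u, G.Adj c u → u ∉ Y' → u ∈ reachSet G X {v} :=
      fun c hc u hadj hu =>
        reachSet_closed c hc u hadj (hCX c hc) fun h => hu (Or.inr h)
    have e3 : ∀ c ∈ reachSet G X {v}, c ∉ Y' := by
      intro c hc hcY'
      rcases hcY' with h | h
      · exact h.2 hc
      · exact hCX c hc h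
    obtain ⟨hY'mc, hY'sep, hY'rsub⟩ :=
      exchange_sol hW hYsol e1 hCW e3 Set.subset_union_left
    have hY'Y : Y' ⊆ Y := Set.union_subset Set.diff_subset hXY
    have hss : Y' ⊂ Y := by
      refine ⟨hY'Y, fun hsub => ?_⟩
      exact e3 v hvC (hsub hvY)
    have hlt : Y'.ncard < Y.ncard := Set.ncard_lt_ncard hss Y.toFinite
    have hY'W : Disjoint Y' W := Disjoint.mono_left hY'Y hYW
    have hY'sol : IsSolution G Pairs W k Y' :=
      ⟨(Set.ncard_le_ncard hY'Y Y.toFinite).trans hYk, hY'mc, hY'W, hY'sep⟩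
    have := (hkey Y' hY'sol hY'rsub).2
    omega
end

section
/- Let G = (V,E) be a finite simple undirected graph and W ⊆ V a vertex set such that no two distinct vertices of W are adjacent in G, and suppose there is no non-zero vertex for (G,W). Let f* be an optimal solution of the dual LP for (G,W) that maximizes the number of untight vertices, and for w ∈ W let U_w be the untight region of w with respect to f*. Then for any two distinct w_i, w_j ∈ W, N(U_{w_i}) ∩ N(U_{w_j}) = ∅. -/
open scoped Classical

variable {V : Type*} [Fintype V] [DecidableEq V]

open scoped ENNReal

/-- A simple path of `G` connecting two distinct vertices of `W`. -/
structure WPath {V : Type*} (G : SimpleGraph V) (W : Set V) where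
  a : V
  b : V
  ha : a ∈ W
  hb : b ∈ W
  hne : a ≠ b
  walk : G.Walk a b
  ispath : walk.IsPath

/-- The objective value `∑_{v ∈ V ∖ W} d_v` of the multiway-cut LP. -/
noncomputable def LPObj (W : Set V) (d : V → ℝ≥0∞) : ℝ≥0∞ :=
  ∑ v ∈ Finset.univ.filter (fun v => v ∉ W), d v

/-- Feasibility for the multiway-cut LP: `∑_{v ∈ V(P) ∖ W} d_v ≥ 1` for every
simple path `P` connecting two distinct vertices of `W`. -/
def LPFeasible (G : SimpleGraph V) (W : Set V) (d : V → ℝ≥0∞) : Prop :=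
  ∀ P : WPath G W,
    1 ≤ ∑ v ∈ Finset.univ.filter (fun v => v ∈ P.walk.support ∧ v ∉ W), d v

/-- The optimal value of the multiway-cut LP (`⊤` if the LP is infeasible). -/
noncomputable def OPTlp (G : SimpleGraph V) (W : Set V) : ℝ≥0∞ :=
  ⨅ (d : V → ℝ≥0∞) (_ : LPFeasible G W d), LPObj W d

/-- An optimal solution of the multiway-cut LP. -/
def IsOptimalLP (G : SimpleGraph V) (W : Set V) (d : V → ℝ≥0∞) : Prop :=
  LPFeasible G W d ∧ LPObj W d = OPTlp G W

/-- A non-zero vertex: a vertex `v ∈ V ∖ W` such that every optimal LP solution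
assigns it a positive value. -/
def NonZeroVertex (G : SimpleGraph V) (W : Set V) (v : V) : Prop :=
  v ∉ W ∧ ∀ d, IsOptimalLP G W d → d v ≠ 0

/-- A `{w}`–`(W ∖ {w})` separator: `X ⊆ V ∖ W` whose removal disconnects `w` from
every other vertex of `W`. -/
def IsIsolSep (G : SimpleGraph V) (W : Set V) (w : V) (X : Set V) : Prop :=
  Disjoint X W ∧ ∀ w' ∈ W, w' ≠ w → ¬ (removeVerts G X).Reachable w w'

/-- `mincut(G, w, W ∖ {w})`: the minimum size of a `{w}`–`(W ∖ {w})` separator. -/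
noncomputable def mincutIso (G : SimpleGraph V) (W : Set V) (w : V) : ℕ :=
  sInf {n | ∃ X, IsIsolSep G W w X ∧ X.ncard = n}

/-- The objective value `∑_P f_P` of the dual LP. -/
noncomputable def DualObj {G : SimpleGraph V} {W : Set V} (f : WPath G W → ℝ≥0∞) : ℝ≥0∞ :=
  ∑' P, f P

/-- The total dual load `∑_{P : v ∈ V(P)} f_P` on a vertex `v`. -/
noncomputable def vertLoad {G : SimpleGraph V} {W : Set V} (f : WPath G W → ℝ≥0∞)
    (v : V) : ℝ≥0∞ :=
  ∑' P : WPath G W, (if v ∈ P.walk.support then f P else 0)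

/-- Feasibility for the dual LP. -/
def DualFeasible (G : SimpleGraph V) (W : Set V) (f : WPath G W → ℝ≥0∞) : Prop :=
  ∀ v, v ∉ W → vertLoad f v ≤ 1

/-- An optimal solution of the dual LP: feasible and of maximum objective value. -/
def DualOptimal (G : SimpleGraph V) (W : Set V) (f : WPath G W → ℝ≥0∞) : Prop :=
  DualFeasible G W f ∧ ∀ g, DualFeasible G W g → DualObj g ≤ DualObj f

/-- A vertex `v ∈ V ∖ W` is untight w.r.t. `f` if its capacity constraint is not binding. -/
def Untight {G : SimpleGraph V} {W : Set V} (f : WPath G W → ℝ≥0∞) (v : V) : Prop :=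
  vertLoad f v ≠ 1

/-- The untight region `U_w`: the vertices of `V ∖ W` reachable from `w` by a path all
of whose vertices other than `w` are untight. -/
def untightRegion (G : SimpleGraph V) (W : Set V) (f : WPath G W → ℝ≥0∞) (w : V) :
    Set V :=
  {v | v ∉ W ∧ ∃ p : G.Walk w v, ∀ x ∈ p.support, x = w ∨ (x ∉ W ∧ Untight f x)}


lemma collapse_sum {ι T : Type*} [Fintype ι] [Fintype T] (π : T → ι) (w : T → ℝ)
    (g : ι → ℝ) :
    ∑ i, (∑ k, if π k = i then w k else 0) * g i = ∑ k, w k * g (π k) := by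
  have : ∀ i, (∑ k, if π k = i then w k else 0) * g i
      = ∑ k, (if π k = i then w k * g i else 0) := by
    intro i
    rw [Finset.sum_mul]
    exact Finset.sum_congr rfl fun k _ => by split <;> simp
  simp_rw [this]
  rw [Finset.sum_comm]
  refine Finset.sum_congr rfl fun k _ => ?_
  simp [Finset.sum_ite_eq]

universe u_fk
theorem farkas_aux (n : ℕ) : ∀ (ι : Type u_fk) [Fintype ι] (A : ι → Fin n → ℝ) (b : ι → ℝ),
    (∀ x : Fin n → ℝ, ∃ i, b i < ∑ j, A i j * x j) →
    ∃ y : ι → ℝ, (∀ i, 0 ≤ y i) ∧ (∀ j, ∑ i, y i * A i j = 0) ∧ ∑ i, y i * b i < 0 := by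
  induction n with
  | zero =>
    intro ι _ A b h
    obtain ⟨i, hi⟩ := h (fun _ => 0)
    simp only [Finset.univ_eq_empty, Finset.sum_empty] at hi
    refine ⟨fun i' => if i' = i then 1 else 0, fun i' => by positivity,
      fun j => j.elim0, ?_⟩
    simp [Finset.sum_ite_eq', hi]
  | succ n IH =>
    intro ι _ A b h
    set a : ι → ℝ := fun i => A i (Fin.last n) with ha
    set A' : ι → Fin n → ℝ := fun i j => A i j.castSucc with hA'
    set ιz := {i : ι // a i = 0}
    set ιp := {i : ι // 0 < a i}
    set ιm := {i : ι // a i < 0}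
    set B : ιz ⊕ (ιp × ιm) → Fin n → ℝ := fun k j =>
      Sum.rec (fun i => A' i.1 j)
        (fun k => A' k.1.1 j / a k.1.1 + A' k.2.1 j / (-a k.2.1)) k with hB
    set c : ιz ⊕ (ιp × ιm) → ℝ := fun k =>
      Sum.rec (fun i => b i.1) (fun k => b k.1.1 / a k.1.1 + b k.2.1 / (-a k.2.1)) k with hc
    have hred : ∀ x' : Fin n → ℝ, ∃ k, c k < ∑ j, B k j * x' j := by
      by_contra hcon
      push_neg at hcon
      obtain ⟨x', hx'⟩ := hcon
      set S : ι → ℝ := fun i => ∑ j, A' i j * x' j with hS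
      set U : ιp → ℝ := fun p => (b p.1 - S p.1) / a p.1 with hU
      set L : ιm → ℝ := fun m => (b m.1 - S m.1) / a m.1 with hL
      have hLU : ∀ (p : ιp) (m : ιm), L m ≤ U p := by
        intro p m
        have hthis := hx' (Sum.inr (p, m))
        simp only [hB, hc] at hthis
        have hsum : ∑ j, (A' p.1 j / a p.1 + A' m.1 j / (-a m.1)) * x' j
            = S p.1 / a p.1 + S m.1 / (-a m.1) := by
          simp_rw [add_mul, div_mul_eq_mul_div, Finset.sum_add_distrib, ← Finset.sum_div]; rfl
        rw [hsum] at hthis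
        have h2 : (S p.1 - b p.1)/a p.1 ≤ (b m.1 - S m.1)/(-a m.1) := by
          rw [sub_div, sub_div]
          have e0 : S m.1 / (-a m.1) - b m.1 / (-a m.1)
              = -(b m.1 / (-a m.1) - S m.1 / (-a m.1)) := by ring
          linarith
        have e1 : (b m.1 - S m.1) / (-a m.1) = -((b m.1 - S m.1)/ a m.1) := div_neg _
        have e2 : (b p.1 - S p.1)/a p.1 = -((S p.1 - b p.1)/a p.1) := by
          rw [← neg_div, neg_sub]
        show (b m.1 - S m.1) / a m.1 ≤ (b p.1 - S p.1) / a p.1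
        linarith
      -- choose the value of the last variable
      have ht : ∃ t : ℝ, (∀ p : ιp, t ≤ U p) ∧ (∀ m : ιm, L m ≤ t) := by
        by_cases hp : Nonempty ιp
        · have hne : (Finset.univ : Finset ιp).Nonempty := Finset.univ_nonempty
          refine ⟨Finset.univ.inf' hne U, fun p => Finset.inf'_le _ (Finset.mem_univ p), ?_⟩
          intro m
          exact Finset.le_inf' hne _ fun p _ => hLU p m
        · by_cases hm : Nonempty ιm
          · have hne : (Finset.univ : Finset ιm).Nonempty := Finset.univ_nonempty
            refine ⟨Finset.univ.sup' hne L, fun p => absurd ⟨p⟩ hp, ?_⟩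
            intro m; exact Finset.le_sup' _ (Finset.mem_univ m)
          · exact ⟨0, fun p => absurd ⟨p⟩ hp, fun m => absurd ⟨m⟩ hm⟩
      obtain ⟨t, htU, htL⟩ := ht
      obtain ⟨i, hi⟩ := h (Fin.snoc x' t)
      have hsplit : ∑ j, A i j * (Fin.snoc x' t : Fin (n+1) → ℝ) j = S i + a i * t := by
        rw [Fin.sum_univ_castSucc]
        simp [hS, hA', ha]
      rw [hsplit] at hi
      rcases lt_trichotomy (a i) 0 with hneg | hzero | hpos
      · have := htL ⟨i, hneg⟩
        have h3 : (b i - S i) / a i ≤ t := this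
        have h4 : a i * t ≤ a i * ((b i - S i)/ a i) :=
          (mul_le_mul_left_of_neg hneg).mpr h3
        rw [mul_div_cancel₀ _ (ne_of_lt hneg)] at h4
        linarith
      · have := hx' (Sum.inl ⟨i, hzero⟩)
        simp only [hB, hc] at this
        have : S i ≤ b i := this
        rw [hzero] at hi; linarith
      · have := htU ⟨i, hpos⟩
        have h3 : t ≤ (b i - S i) / a i := this
        have h4 : a i * t ≤ a i * ((b i - S i)/ a i) := by
          exact mul_le_mul_of_nonneg_left h3 (le_of_lt hpos)
        rw [mul_div_cancel₀ _ (ne_of_gt hpos)] at h4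
        linarith
    obtain ⟨y', hy'0, hy'A, hy'b⟩ := IH _ B c hred
    -- reassemble the certificate
    set y : ι → ℝ := fun i =>
        (∑ iz : ιz, if iz.1 = i then y' (Sum.inl iz) else 0)
      + (∑ k : ιp × ιm, if k.1.1 = i then y' (Sum.inr k) / a k.1.1 else 0)
      + (∑ k : ιp × ιm, if k.2.1 = i then y' (Sum.inr k) / (-a k.2.1) else 0) with hy
    have hkey : ∀ g : ι → ℝ, ∑ i, y i * g i
        = (∑ iz : ιz, y' (Sum.inl iz) * g iz.1)
        + (∑ k : ιp × ιm, (y' (Sum.inr k) / a k.1.1) * g k.1.1)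
        + (∑ k : ιp × ιm, (y' (Sum.inr k) / (-a k.2.1)) * g k.2.1) := by
      intro g
      simp_rw [hy, add_mul, Finset.sum_add_distrib]
      rw [collapse_sum (fun iz : ιz => iz.1) (fun iz => y' (Sum.inl iz)) g,
        collapse_sum (fun k : ιp × ιm => k.1.1) (fun k => y' (Sum.inr k) / a k.1.1) g,
        collapse_sum (fun k : ιp × ιm => k.2.1) (fun k => y' (Sum.inr k) / (-a k.2.1)) g]
    have hy0 : ∀ i, 0 ≤ y i := by
      intro i
      have h1 : (0:ℝ) ≤ ∑ iz : ιz, if iz.1 = i then y' (Sum.inl iz) else 0 :=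
        Finset.sum_nonneg fun iz _ => by split; exacts [hy'0 _, le_refl 0]
      have h2 : (0:ℝ) ≤ ∑ k : ιp × ιm, if k.1.1 = i then y' (Sum.inr k) / a k.1.1 else 0 :=
        Finset.sum_nonneg fun k _ => by
          split
          · exact div_nonneg (hy'0 _) (le_of_lt k.1.2)
          · exact le_refl 0
      have h3 : (0:ℝ) ≤ ∑ k : ιp × ιm, if k.2.1 = i then y' (Sum.inr k) / (-a k.2.1) else 0 :=
        Finset.sum_nonneg fun k _ => by
          split
          · exact div_nonneg (hy'0 _) (by linarith [k.2.2])
          · exact le_refl 0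
      rw [hy]; dsimp only; linarith
    refine ⟨y, hy0, ?_, ?_⟩
    · intro j
      refine Fin.lastCases ?_ ?_ j
      · -- last column
        rw [hkey (fun i => A i (Fin.last n))]
        have e1 : ∑ iz : ιz, y' (Sum.inl iz) * A iz.1 (Fin.last n) = 0 :=
          Finset.sum_eq_zero fun iz _ => by
            have h0 : A iz.1 (Fin.last n) = 0 := iz.2
            rw [h0, mul_zero]
        have e2 : ∀ k : ιp × ιm,
            (y' (Sum.inr k) / a k.1.1) * A k.1.1 (Fin.last n)
            + (y' (Sum.inr k) / (-a k.2.1)) * A k.2.1 (Fin.last n) = 0 := by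
          intro k
          have h1 : a k.1.1 ≠ 0 := ne_of_gt k.1.2
          have h2 : a k.2.1 ≠ 0 := ne_of_lt k.2.2
          have e : A k.1.1 (Fin.last n) = a k.1.1 := rfl
          have e' : A k.2.1 (Fin.last n) = a k.2.1 := rfl
          rw [e, e', div_mul_cancel₀ _ h1, div_neg, neg_mul, div_mul_cancel₀ _ h2]
          ring
        rw [e1, zero_add, ← Finset.sum_add_distrib]
        exact Finset.sum_eq_zero fun k _ => e2 k
      · intro j'
        rw [hkey (fun i => A i j'.castSucc)]
        have hthis := hy'A j'
        rw [Fintype.sum_sum_type] at hthis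
        simp only [hB, hA'] at hthis
        rw [add_assoc, ← Finset.sum_add_distrib]
        have e : ∑ k : ιp × ιm, (y' (Sum.inr k) / a k.1.1 * A k.1.1 j'.castSucc
            + y' (Sum.inr k) / (-a k.2.1) * A k.2.1 j'.castSucc)
            = ∑ k : ιp × ιm, y' (Sum.inr k)
              * (A k.1.1 j'.castSucc / a k.1.1 + A k.2.1 j'.castSucc / (-a k.2.1)) :=
          Finset.sum_congr rfl fun k _ => by ring
        rw [e]
        exact hthis
    · rw [hkey b]
      have := hy'b
      rw [Fintype.sum_sum_type] at this
      simp only [hc] at this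
      have e : ∑ k : ιp × ιm, y' (Sum.inr k) * (b k.1.1 / a k.1.1 + b k.2.1 / (-a k.2.1))
          = (∑ k : ιp × ιm, (y' (Sum.inr k) / a k.1.1) * b k.1.1)
          + (∑ k : ιp × ιm, (y' (Sum.inr k) / (-a k.2.1)) * b k.2.1) := by
        rw [← Finset.sum_add_distrib]
        refine Finset.sum_congr rfl fun k _ => ?_
        ring
      rw [e] at this
      linarith

noncomputable instance {G : SimpleGraph V} {W : Set V} : Fintype (WPath G W) := by
  letI : DecidableRel G.Adj := Classical.decRel _
  exact Fintype.ofInjective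
    (fun P : WPath G W => (⟨P.a, P.b, ⟨P.walk, P.ispath⟩⟩ : Σ a b : V, G.Path a b))
    (by
      rintro ⟨a, b, ha, hb, hne, w, hw⟩ ⟨a', b', ha', hb', hne', w', hw'⟩ h
      simp only [Sigma.mk.inj_iff] at h
      obtain ⟨rfl, h⟩ := h
      obtain ⟨rfl, h⟩ := Sigma.mk.inj_iff.mp (eq_of_heq h)
      have := eq_of_heq h
      simp_all)

section Duality

variable {G : SimpleGraph V} {W : Set V}

private lemma dualObj_eq_sum (f : WPath G W → ℝ≥0∞) : DualObj f = ∑ P, f P :=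
  tsum_fintype _

private lemma vertLoad_eq_sum (f : WPath G W → ℝ≥0∞) (v : V) :
    vertLoad f v = ∑ P, if v ∈ P.walk.support then f P else 0 :=
  tsum_fintype _

private lemma weak_le1 (f : WPath G W → ℝ≥0∞) (d : V → ℝ≥0∞) (hd : LPFeasible G W d) :
    DualObj f ≤ ∑ v ∈ Finset.univ.filter (fun v => v ∉ W), d v * vertLoad f v := by
  rw [dualObj_eq_sum]
  have step1 : ∑ P : WPath G W, f P
      ≤ ∑ P : WPath G W,
          f P * ∑ v ∈ Finset.univ.filter (fun v => v ∈ P.walk.support ∧ v ∉ W), d v := by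
    refine Finset.sum_le_sum fun P _ => ?_
    conv_lhs => rw [← mul_one (f P)]
    exact mul_le_mul_right (hd P) _
  refine step1.trans (le_of_eq ?_)
  have hfilt : ∀ P : WPath G W,
      Finset.univ.filter (fun v => v ∈ P.walk.support ∧ v ∉ W)
      = (Finset.univ.filter (fun v => v ∉ W)).filter (fun v => v ∈ P.walk.support) := by
    intro P; ext v; simp [and_comm]
  calc ∑ P : WPath G W,
        f P * ∑ v ∈ Finset.univ.filter (fun v => v ∈ P.walk.support ∧ v ∉ W), d v
      = ∑ P : WPath G W, ∑ v ∈ Finset.univ.filter (fun v => v ∉ W),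
          (if v ∈ P.walk.support then f P * d v else 0) := by
        refine Finset.sum_congr rfl fun P _ => ?_
        rw [hfilt P, Finset.sum_filter, Finset.mul_sum]
        exact Finset.sum_congr rfl fun v _ => by split <;> simp
    _ = ∑ v ∈ Finset.univ.filter (fun v => v ∉ W), ∑ P : WPath G W,
          (if v ∈ P.walk.support then f P * d v else 0) := Finset.sum_comm
    _ = ∑ v ∈ Finset.univ.filter (fun v => v ∉ W), d v * vertLoad f v := by
        refine Finset.sum_congr rfl fun v _ => ?_
        rw [vertLoad_eq_sum, Finset.mul_sum]
        exact Finset.sum_congr rfl fun P _ => by split <;> [ring; simp]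

private lemma weak_le2 (f : WPath G W → ℝ≥0∞) (d : V → ℝ≥0∞) (hf : DualFeasible G W f) :
    ∑ v ∈ Finset.univ.filter (fun v => v ∉ W), d v * vertLoad f v ≤ LPObj W d := by
  refine Finset.sum_le_sum fun v hv => ?_
  rw [Finset.mem_filter] at hv
  calc d v * vertLoad f v ≤ d v * 1 := mul_le_mul_right (hf v hv.2) _
  _ = d v := mul_one _

private lemma optlp_lt_top (d : V → ℝ≥0∞) (hd : LPFeasible G W d) : OPTlp G W < ⊤ := by
  have hone : LPFeasible G W (fun _ => (1 : ℝ≥0∞)) := by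
    intro P
    have h1 := hd P
    rcases Finset.eq_empty_or_nonempty
      (Finset.univ.filter (fun v => v ∈ P.walk.support ∧ v ∉ W)) with he | hne
    · rw [he, Finset.sum_empty] at h1
      exact absurd h1 (by simp)
    · rw [Finset.sum_const, nsmul_eq_mul, mul_one]
      exact_mod_cast Nat.one_le_iff_ne_zero.mpr (Finset.card_ne_zero_of_mem hne.choose_spec)
  have h2 : OPTlp G W ≤ LPObj W (fun _ => (1:ℝ≥0∞)) := by
    refine le_trans (iInf_le _ (fun _ => (1:ℝ≥0∞))) ?_
    exact iInf_le _ hone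
  refine lt_of_le_of_lt h2 ?_
  rw [LPObj]
  rw [Finset.sum_const, nsmul_eq_mul, mul_one]
  exact ENNReal.natCast_lt_top _

private lemma opt_le_dual (f : WPath G W → ℝ≥0∞) (hopt : DualOptimal G W f)
    (d : V → ℝ≥0∞) (hd : LPFeasible G W d) : OPTlp G W ≤ DualObj f := by
  by_contra hlt
  push_neg at hlt
  have hOPTtop : OPTlp G W < ⊤ := optlp_lt_top d hd
  obtain ⟨c, hc1, hc2⟩ := exists_between hlt
  have hcne : c ≠ ⊤ := (hc2.trans hOPTtop).ne
  have hc0 : 0 < c := lt_of_le_of_lt zero_le hc1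
  set γ := c.toReal with hγ
  have hγpos : 0 < γ := ENNReal.toReal_pos hc0.ne' hcne
  set n := Fintype.card (WPath G W) with hn
  set e : WPath G W ≃ Fin n := Fintype.equivFin _ with he
  set AA : Option (V ⊕ WPath G W) → Fin n → ℝ := fun i j =>
    match i with
    | none => -1
    | some (Sum.inl v) => if v ∉ W ∧ v ∈ (e.symm j).walk.support then 1 else 0
    | some (Sum.inr P) => if e.symm j = P then -1 else 0
    with hAA
  set bb : Option (V ⊕ WPath G W) → ℝ := fun i =>
    match i with
    | none => -γ
    | some (Sum.inl _) => 1
    | some (Sum.inr _) => 0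
    with hbb
  have hsys : ∀ x : Fin n → ℝ, ∃ i, bb i < ∑ j, AA i j * x j := by
    by_contra hcon
    push_neg at hcon
    obtain ⟨x, hx⟩ := hcon
    set y : WPath G W → ℝ := fun P => x (e P) with hy
    have hy0 : ∀ P, 0 ≤ y P := by
      intro P
      have h1 := hx (some (Sum.inr P))
      have hs : ∑ j, AA (some (Sum.inr P)) j * x j = -x (e P) := by
        rw [Fintype.sum_eq_single (e P)]
        · simp [hAA]
        · intro j hj
          have hne' : e.symm j ≠ P := by
            intro hh; exact hj (by rw [← hh]; simp)
          simp [hAA, hne']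
      rw [hs] at h1
      have : bb (some (Sum.inr P)) = 0 := rfl
      rw [this] at h1
      simpa [hy] using neg_nonpos.mp h1
    have hloadrow : ∀ v, v ∉ W →
        ∑ P : WPath G W, (if v ∈ P.walk.support then y P else 0) ≤ 1 := by
      intro v hv
      have h1 := hx (some (Sum.inl v))
      have hs : ∑ j, AA (some (Sum.inl v)) j * x j
          = ∑ P : WPath G W, (if v ∈ P.walk.support then y P else 0) := by
        rw [← Equiv.sum_comp e.symm
          (fun P => if v ∈ P.walk.support then y P else 0)]
        refine Finset.sum_congr rfl fun j _ => ?_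
        by_cases hmem : v ∈ (e.symm j).walk.support
        · simp [hAA, hv, hmem, hy]
        · simp [hAA, hv, hmem]
      rw [hs] at h1
      exact h1.trans (le_of_eq rfl)
    have hobjrow : γ ≤ ∑ P : WPath G W, y P := by
      have h1 := hx none
      have hs : ∑ j, AA none j * x j = -∑ j, x j := by
        simp [hAA, Finset.sum_neg_distrib]
      rw [hs] at h1
      have h2 : (bb none : ℝ) = -γ := rfl
      rw [h2, neg_le_neg_iff] at h1
      rw [← Equiv.sum_comp e x] at h1
      exact h1
    set g : WPath G W → ℝ≥0∞ := fun P => ENNReal.ofReal (y P) with hg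
    have hgfeas : DualFeasible G W g := by
      intro v hv
      rw [vertLoad_eq_sum]
      have : ∑ P : WPath G W, (if v ∈ P.walk.support then g P else 0)
          = ENNReal.ofReal (∑ P : WPath G W, (if v ∈ P.walk.support then y P else 0)) := by
        rw [ENNReal.ofReal_sum_of_nonneg (fun P _ => by split <;> [exact hy0 P; rfl])]
        exact Finset.sum_congr rfl fun P _ => by split <;> simp [hg]
      rw [this]
      calc ENNReal.ofReal (∑ P : WPath G W, (if v ∈ P.walk.support then y P else 0))
          ≤ ENNReal.ofReal 1 := ENNReal.ofReal_le_ofReal (hloadrow v hv)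
        _ = 1 := ENNReal.ofReal_one
    have hgobj : c ≤ DualObj g := by
      rw [dualObj_eq_sum]
      have : ∑ P : WPath G W, g P = ENNReal.ofReal (∑ P : WPath G W, y P) := by
        rw [ENNReal.ofReal_sum_of_nonneg (fun P _ => hy0 P)]
      rw [this, ← ENNReal.ofReal_toReal hcne]
      exact ENNReal.ofReal_le_ofReal hobjrow
    have := hopt.2 g hgfeas
    exact absurd (lt_of_le_of_lt (hgobj.trans this) hc1) (lt_irrefl _)
  obtain ⟨yF, hyF0, hyFA, hyFb⟩ := farkas_aux n (Option (V ⊕ WPath G W)) AA bb hsys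
  set q : V → ℝ := fun v => yF (some (Sum.inl v)) with hq
  set r : ℝ := yF none with hr
  have hq0 : ∀ v, 0 ≤ q v := fun v => hyF0 _
  have hr0 : 0 ≤ r := hyF0 _
  have hcol : ∀ P : WPath G W,
      ∑ v ∈ Finset.univ.filter (fun v => v ∈ P.walk.support ∧ v ∉ W), q v
        = yF (some (Sum.inr P)) + r := by
    intro P
    have h1 := hyFA (e P)
    rw [Fintype.sum_option, Fintype.sum_sum_type] at h1
    have e1 : yF none * AA none (e P) = -r := by simp [hAA, hr]
    have e2 : ∑ P' : WPath G W, yF (some (Sum.inr P')) * AA (some (Sum.inr P')) (e P)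
        = -yF (some (Sum.inr P)) := by
      rw [Fintype.sum_eq_single P]
      · simp [hAA]
      · intro P' hP'
        have hne'' : P ≠ P' := fun hh => hP' hh.symm
        simp [hAA, hne'']
    have e3 : ∑ v : V, yF (some (Sum.inl v)) * AA (some (Sum.inl v)) (e P)
        = ∑ v ∈ Finset.univ.filter (fun v => v ∈ P.walk.support ∧ v ∉ W), q v := by
      have hsymm : e.symm (e P) = P := Equiv.symm_apply_apply e P
      rw [Finset.sum_filter]
      refine Finset.sum_congr rfl fun v _ => ?_
      by_cases h : v ∈ P.walk.support ∧ v ∉ W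
      · have hcond : v ∉ W ∧ v ∈ (e.symm (e P)).walk.support := by
          rw [hsymm]; exact ⟨h.2, h.1⟩
        have hval : AA (some (Sum.inl v)) (e P) = 1 := by
          simp only [hAA]; rw [if_pos hcond]
        rw [hval, if_pos h, mul_one]
      · have h' : ¬ (v ∉ W ∧ v ∈ P.walk.support) := by
          simpa [and_comm] using h
        have hcond : ¬ (v ∉ W ∧ v ∈ (e.symm (e P)).walk.support) := by
          rw [hsymm]; exact h'
        have hval : AA (some (Sum.inl v)) (e P) = 0 := by
          simp only [hAA]; rw [if_neg hcond]
        rw [hval, if_neg h, mul_zero]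
    rw [e1, e2, e3] at h1
    linarith
  have hobj : ∑ v : V, q v < r * γ := by
    have h1 := hyFb
    rw [Fintype.sum_option, Fintype.sum_sum_type] at h1
    have e1 : yF none * bb none = -(r * γ) := by
      have hb : bb none = -γ := rfl
      rw [hb, hr]; ring
    have e2 : ∑ P' : WPath G W, yF (some (Sum.inr P')) * bb (some (Sum.inr P')) = 0 := by
      refine Finset.sum_eq_zero fun P' _ => by simp [hbb]
    have e3 : ∑ v : V, yF (some (Sum.inl v)) * bb (some (Sum.inl v)) = ∑ v : V, q v := by
      refine Finset.sum_congr rfl fun v _ => by simp [hbb, hq]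
    rw [e1, e2, e3] at h1
    linarith
  have hrpos : 0 < r := by
    rcases eq_or_lt_of_le hr0 with hez | hpos
    · exfalso
      rw [← hez, zero_mul] at hobj
      exact absurd hobj (not_lt.mpr (Finset.sum_nonneg fun v _ => hq0 v))
    · exact hpos
  set d' : V → ℝ≥0∞ := fun v => if v ∈ W then 0 else ENNReal.ofReal (q v / r) with hd'
  have hd'feas : LPFeasible G W d' := by
    intro P
    have hsum : ∑ v ∈ Finset.univ.filter (fun v => v ∈ P.walk.support ∧ v ∉ W), d' v
        = ENNReal.ofReal
            ((∑ v ∈ Finset.univ.filter (fun v => v ∈ P.walk.support ∧ v ∉ W), q v) / r) := by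
      rw [Finset.sum_div, ENNReal.ofReal_sum_of_nonneg
        (fun v _ => div_nonneg (hq0 v) hr0)]
      refine Finset.sum_congr rfl fun v hv => ?_
      rw [Finset.mem_filter] at hv
      simp [hd', hv.2.2]
    rw [hsum]
    have : (1:ℝ) ≤ (∑ v ∈ Finset.univ.filter (fun v => v ∈ P.walk.support ∧ v ∉ W), q v) / r := by
      rw [le_div_iff₀ hrpos, one_mul]
      have := hcol P
      have hynn : 0 ≤ yF (some (Sum.inr P)) := hyF0 _
      linarith
    calc (1:ℝ≥0∞) = ENNReal.ofReal 1 := ENNReal.ofReal_one.symm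
      _ ≤ _ := ENNReal.ofReal_le_ofReal this
  have hd'obj : LPObj W d' < c := by
    have hsum : LPObj W d'
        = ENNReal.ofReal ((∑ v ∈ Finset.univ.filter (fun v => v ∉ W), q v) / r) := by
      rw [LPObj, Finset.sum_div, ENNReal.ofReal_sum_of_nonneg
        (fun v _ => div_nonneg (hq0 v) hr0)]
      refine Finset.sum_congr rfl fun v hv => ?_
      rw [Finset.mem_filter] at hv
      simp [hd', hv.2]
    rw [hsum]
    have hlt : (∑ v ∈ Finset.univ.filter (fun v => v ∉ W), q v) / r < γ := by
      rw [div_lt_iff₀ hrpos]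
      have hle : ∑ v ∈ Finset.univ.filter (fun v => v ∉ W), q v ≤ ∑ v : V, q v :=
        Finset.sum_le_sum_of_subset_of_nonneg (Finset.filter_subset _ _)
          (fun v _ _ => hq0 v)
      calc ∑ v ∈ Finset.univ.filter (fun v => v ∉ W), q v ≤ ∑ v : V, q v := hle
        _ < r * γ := hobj
        _ = γ * r := mul_comm _ _
    calc ENNReal.ofReal ((∑ v ∈ Finset.univ.filter (fun v => v ∉ W), q v) / r)
        < ENNReal.ofReal γ := (ENNReal.ofReal_lt_ofReal_iff hγpos).mpr hlt
      _ = c := ENNReal.ofReal_toReal hcne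
  have hOPTle : OPTlp G W ≤ LPObj W d' :=
    le_trans (iInf_le _ d') (iInf_le _ hd'feas)
  exact absurd (lt_of_le_of_lt hOPTle hd'obj) (not_lt.mpr hc2.le)

private lemma cs_untight (f : WPath G W → ℝ≥0∞) (hopt : DualOptimal G W f)
    (d : V → ℝ≥0∞) (hd : IsOptimalLP G W d) :
    ∀ v, v ∉ W → Untight f v → d v = 0 := by
  have h1 : DualObj f ≤ ∑ v ∈ Finset.univ.filter (fun v => v ∉ W), d v * vertLoad f v :=
    weak_le1 f d hd.1
  have h2 : ∑ v ∈ Finset.univ.filter (fun v => v ∉ W), d v * vertLoad f v ≤ LPObj W d :=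
    weak_le2 f d hopt.1
  have h3 : OPTlp G W ≤ DualObj f := opt_le_dual f hopt d hd.1
  have hXd : ∑ v ∈ Finset.univ.filter (fun v => v ∉ W), d v * vertLoad f v = LPObj W d :=
    le_antisymm h2 (by calc LPObj W d = OPTlp G W := hd.2
      _ ≤ DualObj f := h3
      _ ≤ _ := h1)
  have hOPTtop : OPTlp G W < ⊤ := optlp_lt_top d hd.1
  have hLPtop : LPObj W d < ⊤ := hd.2 ▸ hOPTtop
  have hfin : ∀ w ∈ Finset.univ.filter (fun v => v ∉ W), d w ≠ ⊤ := by
    intro w hw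
    intro htop
    rw [LPObj] at hLPtop
    exact absurd (ENNReal.sum_eq_top.mpr ⟨w, hw, htop⟩ ▸ hLPtop) (lt_irrefl _)
  intro v hvW hvu
  by_contra hdv0
  have hvfilt : v ∈ Finset.univ.filter (fun w => w ∉ W) := by simp [hvW]
  have hloadle : vertLoad f v ≤ 1 := hopt.1 v hvW
  have hloadlt : vertLoad f v < 1 := lt_of_le_of_ne hloadle hvu
  -- convert to real numbers
  have hterm : ∀ w ∈ Finset.univ.filter (fun w => w ∉ W), d w * vertLoad f w ≠ ⊤ := by
    intro w hw
    rw [Finset.mem_filter] at hw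
    exact ENNReal.mul_ne_top (hfin w (by simp [hw.2]))
      (lt_of_le_of_lt (hopt.1 w hw.2) (by norm_num)).ne
  have hreal : ∑ w ∈ Finset.univ.filter (fun w => w ∉ W), (d w).toReal * (vertLoad f w).toReal
      = ∑ w ∈ Finset.univ.filter (fun w => w ∉ W), (d w).toReal := by
    have lhs := ENNReal.toReal_sum hterm
    have rhs : (LPObj W d).toReal
        = ∑ w ∈ Finset.univ.filter (fun w => w ∉ W), (d w).toReal := by
      rw [LPObj]; exact ENNReal.toReal_sum hfin
    calc ∑ w ∈ Finset.univ.filter (fun w => w ∉ W), (d w).toReal * (vertLoad f w).toReal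
        = ∑ w ∈ Finset.univ.filter (fun w => w ∉ W), (d w * vertLoad f w).toReal :=
          Finset.sum_congr rfl fun w _ => (ENNReal.toReal_mul).symm
      _ = (∑ w ∈ Finset.univ.filter (fun w => w ∉ W), d w * vertLoad f w).toReal := lhs.symm
      _ = (LPObj W d).toReal := by rw [hXd]
      _ = ∑ w ∈ Finset.univ.filter (fun w => w ∉ W), (d w).toReal := rhs
  have hle : ∀ w ∈ Finset.univ.filter (fun w => w ∉ W),
      (d w).toReal * (vertLoad f w).toReal ≤ (d w).toReal := by
    intro w hw
    rw [Finset.mem_filter] at hw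
    have : (vertLoad f w).toReal ≤ 1 := by
      have := hopt.1 w hw.2
      calc (vertLoad f w).toReal ≤ (1:ℝ≥0∞).toReal :=
        ENNReal.toReal_mono (by norm_num) this
        _ = 1 := by simp
    exact mul_le_of_le_one_right ENNReal.toReal_nonneg this
  have hstrict : (d v).toReal * (vertLoad f v).toReal < (d v).toReal := by
    have hdvpos : 0 < (d v).toReal := ENNReal.toReal_pos hdv0 (hfin v hvfilt)
    have hloadr : (vertLoad f v).toReal < 1 := by
      have := ENNReal.toReal_lt_toReal (lt_of_le_of_lt hloadle (by norm_num)).ne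
        (by norm_num : (1:ℝ≥0∞) ≠ ⊤)
      simpa using this.mpr hloadlt
    calc (d v).toReal * (vertLoad f v).toReal < (d v).toReal * 1 := by
          exact mul_lt_mul_of_pos_left hloadr hdvpos
      _ = (d v).toReal := mul_one _
  have := Finset.sum_lt_sum hle ⟨v, hvfilt, hstrict⟩
  rw [hreal] at this
  exact absurd this (lt_irrefl _)

end Duality

/-- If `W` is independent, there is no non-zero vertex, and `f` is an optimal
dual solution maximizing the number of untight vertices, then the neighborhoods of the untight
regions of distinct terminals are disjoint. -/
theorem untight_region_neighborhoods_disjoint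
    (G : SimpleGraph V) (W : Set V)
    (hInd : ∀ w₁ ∈ W, ∀ w₂ ∈ W, w₁ ≠ w₂ → ¬ G.Adj w₁ w₂)
    (hNZ : ∀ v, ¬ NonZeroVertex G W v)
    (f : WPath G W → ℝ≥0∞) (hopt : DualOptimal G W f)
    (hmax : ∀ g, DualOptimal G W g →
      {v | v ∉ W ∧ Untight g v}.ncard ≤ {v | v ∉ W ∧ Untight f v}.ncard) :
    ∀ wi ∈ W, ∀ wj ∈ W, wi ≠ wj →
      nbhd G (untightRegion G W f wi) ∩ nbhd G (untightRegion G W f wj) = ∅ := by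
  intro wi hwi wj hwj hne
  rw [Set.eq_empty_iff_forall_notMem]
  rintro x ⟨⟨hxUi, u, huU, hadj⟩, hxUj, u', huU', hadj'⟩
  obtain ⟨huW, p, hp⟩ := huU
  obtain ⟨huW', p', hp'⟩ := huU'
  have hexd : ∃ d, IsOptimalLP G W d ∧ (x ∉ W → d x = 0) := by
    by_cases hxW : x ∈ W
    · have h := hNZ u
      rw [NonZeroVertex] at h
      push_neg at h
      obtain ⟨d, hd, -⟩ := h huW
      exact ⟨d, hd, fun h' => absurd hxW h'⟩
    · have h := hNZ x
      rw [NonZeroVertex] at h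
      push_neg at h
      obtain ⟨d, hd, hdx⟩ := h hxW
      exact ⟨d, hd, fun _ => hdx⟩
  obtain ⟨d, hd, hdx⟩ := hexd
  have hCS := cs_untight f hopt d hd
  set A : G.Walk wi x := p.append (SimpleGraph.Walk.cons hadj SimpleGraph.Walk.nil) with hA
  set B : G.Walk wj x := p'.append (SimpleGraph.Walk.cons hadj' SimpleGraph.Walk.nil) with hB
  set Q : G.Walk wi wj := A.append B.reverse with hQ
  have hR : Q.bypass.IsPath := Q.bypass_isPath
  have hsub : Q.bypass.support ⊆ Q.support := Q.support_bypass_subset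
  have hfeas : 1 ≤ ∑ v ∈ Finset.univ.filter
      (fun v => v ∈ Q.bypass.support ∧ v ∉ W), d v :=
    hd.1 ⟨wi, wj, hwi, hwj, hne, Q.bypass, hR⟩
  have hzero : ∑ v ∈ Finset.univ.filter
      (fun v => v ∈ Q.bypass.support ∧ v ∉ W), d v = 0 := by
    refine Finset.sum_eq_zero fun v hv => ?_
    rw [Finset.mem_filter] at hv
    obtain ⟨-, hvR, hvW⟩ := hv
    have hvQ : v ∈ Q.support := hsub hvR
    rw [hQ, SimpleGraph.Walk.mem_support_append_iff] at hvQ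
    have hside : ∀ (w0 u0 : V), w0 ∈ W → ∀ (pp : G.Walk w0 u0) (hadj0 : G.Adj u0 x),
        (∀ z ∈ pp.support, z = w0 ∨ (z ∉ W ∧ Untight f z)) →
        v ∈ (pp.append (SimpleGraph.Walk.cons hadj0 SimpleGraph.Walk.nil)).support →
        d v = 0 := by
      intro w0 u0 hw0 pp hadj0 hpp hv0
      rw [SimpleGraph.Walk.mem_support_append_iff] at hv0
      rcases hv0 with hvp | hvc
      · rcases hpp v hvp with rfl | hvu
        · exact absurd hw0 hvW
        · exact hCS v hvW hvu.2
      · have hvc' : v = u0 ∨ v = x := by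
          simpa [SimpleGraph.Walk.support_cons] using hvc
        rcases hvc' with rfl | rfl
        · rcases hpp v pp.end_mem_support with rfl | hvu
          · exact absurd hw0 hvW
          · exact hCS v hvW hvu.2
        · exact hdx hvW
    rcases hvQ with hvA | hvB
    · rw [hA] at hvA
      exact hside wi u hwi p hadj hp hvA
    · rw [SimpleGraph.Walk.support_reverse, List.mem_reverse, hB] at hvB
      exact hside wj u' hwj p' hadj' hp' hvB
  rw [hzero] at hfeas
  exact absurd hfeas (by simp)
end
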